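/- For d odd with (d+1)/2 even, and n ≥ d+3, the stabilizer C_n^d of positive (d+1)×n matrices under column permutation is the group of order 2 generated by the order-reversing permutation i ↦ n+1−i. -/

import Mathlib

noncomputable section

/-- The `(d+1)×(d+1)` matrix whose `j`-th column is `(1, cols j)`. -/
def liftMat {d : ℕ} (cols : Fin (d + 1) → Fin d → ℝ) : Matrix (Fin (d + 1)) (Fin (d + 1)) ℝ :=
  Matrix.of fun i j => Fin.cases (motive := fun _ => ℝ) 1 (fun r => cols j r) i

/-- The `(d+1) × n` matrix with columns `(1, x i)` is positive: all maximal minors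
(columns taken in increasing order) are positive. -/
def PosMat {d n : ℕ} (x : Fin n → Fin d → ℝ) : Prop :=
  ∀ S : Fin (d + 1) → Fin n, StrictMono S → 0 < (liftMat fun k => x (S k)).det

/-- `F` is a face of `P`: the set of maximizers in `P` of some linear functional. -/
def IsFace {d : ℕ} (P F : Set (Fin d → ℝ)) : Prop :=
  ∃ f : (Fin d → ℝ) →ₗ[ℝ] ℝ, ∃ c : ℝ,
    (∀ y ∈ P, f y ≤ c) ∧ F = {y ∈ P | f y = c}

/-- `F` is a facet of the `d`-dimensional polytope `P`: a face of dimension `d − 1`. -/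
def IsFacet {d : ℕ} (P F : Set (Fin d → ℝ)) : Prop :=
  IsFace P F ∧ Module.finrank ℝ (vectorSpan ℝ F) = d - 1

/-!
Positions `0, 1, …, n - 1` on the moment curve `s ↦ (s, s², …, sᵈ)` give a positive matrix whose
maximal minors are Vandermonde determinants. Hence a permutation `σ` preserving positivity has an
even number of inversions inside every `(d+1)`-subset. Adding a point `x` to a `d`-subset `A`
changes that parity by the number of inversions between `x` and `A`, which therefore does not
depend on `x ∉ A`. Comparing `d`-subsets that differ in one point (possible as `n ≥ d + 3`) and
using that `d` is odd, one finds that whether a pair is inverted does not depend on the pair: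
`σ` is increasing or decreasing. Conversely, reversing the columns of a `(d+1)`-minor multiplies
it by `(-1) ^ C(d+1, 2)`, which is `1` as `4 ∣ d + 1`.
-/

open Finset Matrix Equiv

theorem Finset.prod_pos_iff_even_card_filter_neg {ι R : Type*} [CommRing R] [LinearOrder R]
    [IsStrictOrderedRing R] {s : Finset ι} {f : ι → R} (hf : ∀ i ∈ s, f i ≠ 0) :
    0 < ∏ i ∈ s, f i ↔ Even #{i ∈ s | f i < 0} := by
  classical
  induction s using Finset.induction_on with
  | empty => simp
  | insert a s ha ih =>
    have hfs : ∀ i ∈ s, f i ≠ 0 := fun i hi => hf i (mem_insert_of_mem hi)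
    have hprod : ∏ i ∈ s, f i ≠ 0 := prod_ne_zero_iff.2 hfs
    rw [prod_insert ha, filter_insert]
    rcases (hf a (mem_insert_self a s)).lt_or_gt with hneg | hpos
    · rw [if_pos hneg, card_insert_of_notMem (by simp [ha]), Nat.even_add_one, ← ih hfs,
        mul_pos_iff, not_lt, hprod.le_iff_lt]
      simp [hneg, hneg.not_gt]
    · rw [if_neg hpos.not_gt, mul_pos_iff_of_pos_left hpos, ih hfs]

theorem Finset.eq_of_forall_card_eq_sum_eq {ι M : Type*} [DecidableEq ι] [AddCancelCommMonoid M]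
    {f : ι → M} {s : Finset ι} {k : ℕ} {c : M} (hk : 1 ≤ k) (hs : k < #s)
    (h : ∀ A ⊆ s, #A = k → ∑ a ∈ A, f a = c) {x y : ι} (hx : x ∈ s) (hy : y ∈ s) :
    f x = f y := by
  obtain rfl | hxy := eq_or_ne x y
  · rfl
  obtain ⟨B, hBs, hB⟩ : ∃ B ⊆ s \ {x, y}, #B = k - 1 := by
    refine exists_subset_card_eq ?_
    rw [card_sdiff_of_subset (by simp [insert_subset_iff, hx, hy]), card_pair hxy]
    omega
  have hsum : ∀ z ∈ s, z ∉ B → ∑ a ∈ insert z B, f a = c := fun z hz hzB =>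
    h _ (insert_subset hz (hBs.trans sdiff_subset)) (by rw [card_insert_of_notMem hzB, hB]; omega)
  have hxB : x ∉ B := fun h => by simpa using hBs h
  have hyB : y ∉ B := fun h => by simpa using hBs h
  have := (hsum x hx hxB).trans (hsum y hy hyB).symm
  rwa [sum_insert hxB, sum_insert hyB, add_left_inj] at this

theorem Finset.eq_zero_of_forall_card_eq_sum_eq_zero {ι : Type*} [DecidableEq ι]
    {f : ι → ZMod 2} {s : Finset ι} {k : ℕ} (hk : Odd k) (hs : k < #s)
    (h : ∀ A ⊆ s, #A = k → ∑ a ∈ A, f a = 0) {x : ι} (hx : x ∈ s) : f x = 0 := by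
  obtain ⟨A, hAs, hA⟩ := exists_subset_card_eq hs.le
  have hconst : ∀ a ∈ A, f a = f x := fun a ha =>
    eq_of_forall_card_eq_sum_eq hk.pos hs h (hAs ha) hx
  rw [← h A hAs hA, sum_congr rfl hconst, sum_const, hA, nsmul_eq_mul,
    ZMod.natCast_eq_one_iff_odd.2 hk, one_mul]

section PairSum

variable {α : Type*} {r : α → α → ZMod 2} {k : ℕ}

def pairSum (r : α → α → ZMod 2) (A : Finset α) : ZMod 2 := ∑ a ∈ A, ∑ b ∈ A, r a b

def symmetrize (r : α → α → ZMod 2) (a b : α) : ZMod 2 := r a b + r b a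

theorem symmetrize_comm (r : α → α → ZMod 2) (a b : α) : symmetrize r a b = symmetrize r b a :=
  add_comm _ _

variable [DecidableEq α]

theorem pairSum_insert (hr : ∀ a, r a a = 0) {x : α} {A : Finset α} (hx : x ∉ A) :
    pairSum r (insert x A) = pairSum r A + ∑ c ∈ A, symmetrize r x c := by
  simp only [pairSum, symmetrize, sum_insert hx, hr, sum_add_distrib]
  ring

theorem sum_symmetrize_eq_of_pairSum_eq_zero (hr : ∀ a, r a a = 0)
    (h : ∀ A : Finset α, #A = k + 1 → pairSum r A = 0) {A : Finset α} (hA : #A = k) {x y : α}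
    (hx : x ∉ A) (hy : y ∉ A) : ∑ c ∈ A, symmetrize r x c = ∑ c ∈ A, symmetrize r y c := by
  have hxA := h (insert x A) (by rw [card_insert_of_notMem hx, hA])
  have hyA := h (insert y A) (by rw [card_insert_of_notMem hy, hA])
  rw [pairSum_insert hr hx] at hxA
  rw [pairSum_insert hr hy] at hyA
  exact add_left_cancel (hxA.trans hyA.symm)

variable [Fintype α]

theorem symmetrize_eq_of_pairSum_eq_zero_of_ne (hr : ∀ a, r a a = 0)
    (h : ∀ A : Finset α, #A = k + 1 → pairSum r A = 0) (hk : Odd k)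
    (hcard : k + 3 ≤ Fintype.card α) {t v w : α} (hv : t ≠ v) (hw : t ≠ w) :
    symmetrize r t v = symmetrize r t w := by
  obtain rfl | hvw := eq_or_ne v w
  · rfl
  have hs : k < #(univ \ {v, w}) := by
    rw [card_sdiff_of_subset (subset_univ _), card_univ, card_pair hvw]
    omega
  have := eq_zero_of_forall_card_eq_sum_eq_zero (f := fun c => symmetrize r v c + symmetrize r w c)
    hk hs (fun A hAs hA => ?_) (x := t) (by simp [hv, hw])
  · rwa [symmetrize_comm r v, symmetrize_comm r w, CharTwo.add_eq_zero] at this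
  · have hvA : v ∉ A := fun hv => by simpa using hAs hv
    have hwA : w ∉ A := fun hw => by simpa using hAs hw
    rw [sum_add_distrib, sum_symmetrize_eq_of_pairSum_eq_zero hr h hA hvA hwA,
      CharTwo.add_self_eq_zero]

theorem symmetrize_eq_of_pairSum_eq_zero (hr : ∀ a, r a a = 0)
    (h : ∀ A : Finset α, #A = k + 1 → pairSum r A = 0) (hk : Odd k)
    (hcard : k + 3 ≤ Fintype.card α) {a b c e : α} (hab : a ≠ b) (hce : c ≠ e) :
    symmetrize r a b = symmetrize r c e := by
  have hadj : ∀ {t v w : α}, t ≠ v → t ≠ w → symmetrize r t v = symmetrize r t w :=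
    symmetrize_eq_of_pairSum_eq_zero_of_ne hr h hk hcard
  obtain rfl | hac := eq_or_ne a c
  · exact hadj hab hce
  calc symmetrize r a b = symmetrize r a c := hadj hab hac
    _ = symmetrize r c a := symmetrize_comm r a c
    _ = symmetrize r c e := hadj hac.symm hce

theorem symmetrize_eq_zero_or_eq_one_of_pairSum_eq_zero (hr : ∀ a, r a a = 0)
    (h : ∀ A : Finset α, #A = k + 1 → pairSum r A = 0) (hk : Odd k)
    (hcard : k + 3 ≤ Fintype.card α) :
    (∀ a b, a ≠ b → symmetrize r a b = 0) ∨ (∀ a b, a ≠ b → symmetrize r a b = 1) := by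
  by_contra! ⟨⟨a, b, hab, h0⟩, ⟨c, e, hce, h1⟩⟩
  have := symmetrize_eq_of_pairSum_eq_zero hr h hk hcard hab hce
  rcases (by decide : ∀ z : ZMod 2, z = 0 ∨ z = 1) (symmetrize r c e) with hz | hz <;> simp_all

end PairSum

section Inversions

variable {α β : Type*} [LinearOrder α] [LinearOrder β]

def inversionInd (t : α → β) (a b : α) : ZMod 2 := if a < b ∧ t b < t a then 1 else 0

theorem inversionInd_self (t : α → β) (a : α) : inversionInd t a a = 0 := by
  simp [inversionInd]

theorem symmetrize_inversionInd_of_lt {t : α → β} {a b : α} (hab : a < b) :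
    symmetrize (inversionInd t) a b = if t b < t a then 1 else 0 := by
  simp [symmetrize, inversionInd, hab, hab.not_gt]

theorem strictMono_of_symmetrize_inversionInd_eq_zero {t : α → β} (ht : Function.Injective t)
    (h : ∀ a b, a ≠ b → symmetrize (inversionInd t) a b = 0) : StrictMono t := fun a b hab => by
  have hab' := h a b hab.ne
  rw [symmetrize_inversionInd_of_lt hab] at hab'
  exact (not_lt.1 fun hba => by simp [hba] at hab').lt_of_ne (ht.ne hab.ne)

theorem strictAnti_of_symmetrize_inversionInd_eq_one {t : α → β}
    (h : ∀ a b, a ≠ b → symmetrize (inversionInd t) a b = 1) : StrictAnti t := fun a b hab => by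
  have hab' := h a b hab.ne
  rw [symmetrize_inversionInd_of_lt hab] at hab'
  by_contra hba
  simp [hba] at hab'

theorem inversionInd_comp_of_strictMono {γ : Type*} [LinearOrder γ] {g : β → γ}
    (hg : StrictMono g) (t : α → β) : inversionInd (g ∘ t) = inversionInd t := by
  ext a b
  simp [inversionInd, hg.lt_iff_lt]

end Inversions

theorem Equiv.Perm.eq_one_of_strictMono {n : ℕ} {σ : Perm (Fin n)} (h : StrictMono σ) : σ = 1 :=
  Equiv.ext fun _ => h.apply_eq

theorem Equiv.Perm.eq_revPerm_of_strictAnti {n : ℕ} {σ : Perm (Fin n)} (h : StrictAnti σ) :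
    σ = Fin.revPerm :=
  Equiv.ext fun i => by
    simpa using (h.comp Fin.rev_strictAnti).apply_eq (x := Fin.rev i)

theorem Fin.sign_revPerm (k : ℕ) : Perm.sign (Fin.revPerm : Perm (Fin k)) = (-1) ^ k.choose 2 := by
  have hfactor (j : Fin k) :
      ∏ i ∈ Iio j, (if rev i < rev j then 1 else -1 : ℤˣ) = (-1) ^ (j : ℕ) := by
    rw [prod_congr rfl fun i hi => if_neg (not_lt.2 (rev_le_rev.2 (mem_Iio.1 hi).le)),
      Finset.prod_const, card_Iio]
  simp only [Perm.sign_eq_prod_prod_Iio, revPerm_apply, hfactor, prod_pow_eq_pow_sum,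
    sum_univ_eq_sum_range (fun i => i), sum_range_id, Nat.choose_two_right]

theorem Nat.even_choose_two_of_four_dvd {k : ℕ} (h : 4 ∣ k) : Even (k.choose 2) := by
  obtain ⟨c, rfl⟩ := h
  rw [Nat.choose_two_right, show 4 * c * (4 * c - 1) = 2 * (2 * c * (4 * c - 1)) by ring,
    Nat.mul_div_cancel_left _ two_pos]
  exact even_two_mul _ |>.mul_right _

section MomentCurve

variable {d n : ℕ}

def momentCurve (d : ℕ) (s : ℝ) : Fin d → ℝ := fun r => s ^ ((r : ℕ) + 1)

theorem liftMat_momentCurve (t : Fin (d + 1) → ℝ) :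
    liftMat (fun k => momentCurve d (t k)) = (vandermonde t)ᵀ := by
  ext i j
  cases i using Fin.cases <;> simp [liftMat, momentCurve, vandermonde]

theorem det_liftMat_momentCurve (t : Fin (d + 1) → ℝ) :
    (liftMat fun k => momentCurve d (t k)).det = ∏ i, ∏ j ∈ Ioi i, (t j - t i) := by
  rw [liftMat_momentCurve, det_transpose, det_vandermonde]

theorem posMat_momentCurve {t : Fin n → ℝ} (ht : StrictMono t) :
    PosMat fun i => momentCurve d (t i) := fun S hS => by
  rw [det_liftMat_momentCurve]
  exact prod_pos fun i _ => prod_pos fun j hj => sub_pos.2 (ht (hS (mem_Ioi.1 hj)))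

theorem pairSum_inversionInd_orderEmbOfFin {β : Type*} [LinearOrder β] (t : Fin n → β)
    {A : Finset (Fin n)} (hA : #A = d + 1) :
    pairSum (inversionInd t) A =
      #{p ∈ univ.sigma fun i => Ioi i |
        t (A.orderEmbOfFin hA p.2) < t (A.orderEmbOfFin hA p.1)} := by
  rw [natCast_card_filter, sum_sigma, pairSum]
  conv_lhs => rw [← map_orderEmbOfFin_univ A hA, sum_map]
  refine sum_congr rfl fun i _ => ?_
  rw [sum_map, ← filter_lt_eq_Ioi, sum_filter]
  refine sum_congr rfl fun j _ => ?_
  simp [inversionInd, ite_and]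

theorem pairSum_inversionInd_eq_zero_of_posMat {t : Fin n → ℝ} (ht : Function.Injective t)
    (hpos : PosMat fun i => momentCurve d (t i)) {A : Finset (Fin n)} (hA : #A = d + 1) :
    pairSum (inversionInd t) A = 0 := by
  set S := A.orderEmbOfFin hA
  have hdet := hpos S S.strictMono
  rw [det_liftMat_momentCurve, prod_sigma', prod_pos_iff_even_card_filter_neg] at hdet
  · simpa [pairSum_inversionInd_orderEmbOfFin t hA, ZMod.natCast_eq_zero_iff_even] using hdet
  · intro p hp
    exact sub_ne_zero.2 (ht.ne (S.injective.ne (mem_Ioi.1 (mem_sigma.1 hp).2).ne'))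

end MomentCurve

theorem posMat_comp_revPerm {d n : ℕ} (hd : Even ((d + 1).choose 2)) {x : Fin n → Fin d → ℝ}
    (hx : PosMat x) : PosMat fun i => x (Fin.revPerm i) := by
  intro S hS
  have hmat : (liftMat fun k => x (Fin.revPerm (S k))) =
      (liftMat fun k => x (Fin.rev (S (Fin.rev k)))).submatrix id Fin.revPerm := by
    ext i j
    simp [liftMat]
  rw [hmat, det_permute', Fin.sign_revPerm, hd.neg_one_pow, Units.val_one, Int.cast_one, one_mul]
  exact hx _ (Fin.rev_strictAnti.comp (hS.comp_strictAnti Fin.rev_strictAnti))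

theorem stabilizer_odd_d_even_half_reversal {d n : ℕ} (hd : Odd d) (hd2 : Even ((d + 1) / 2))
    (hn : d + 3 ≤ n) :
    {σ : Equiv.Perm (Fin n) |
        ∀ x : Fin n → Fin d → ℝ, PosMat x → PosMat fun i => x (σ i)} =
      {1, Fin.revPerm} := by
  have h4 : 4 ∣ d + 1 := by
    obtain ⟨a, rfl⟩ := hd
    obtain ⟨b, hb⟩ := hd2
    omega
  ext σ
  refine ⟨fun hσ => ?_, ?_⟩
  · have hval : StrictMono fun i : Fin n => ((i : ℕ) : ℝ) := fun i j hij => by simpa using hij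
    have hpos := hσ _ (posMat_momentCurve (d := d) hval)
    have hpair (A : Finset (Fin n)) (hA : #A = d + 1) : pairSum (inversionInd σ) A = 0 := by
      rw [← inversionInd_comp_of_strictMono hval]
      exact pairSum_inversionInd_eq_zero_of_posMat (hval.injective.comp σ.injective) hpos hA
    rcases symmetrize_eq_zero_or_eq_one_of_pairSum_eq_zero (inversionInd_self σ) hpair hd
      (by simpa using hn) with h0 | h1
    · exact .inl (Perm.eq_one_of_strictMono
        (strictMono_of_symmetrize_inversionInd_eq_zero σ.injective h0))
    · exact .inr (Perm.eq_revPerm_of_strictAnti (strictAnti_of_symmetrize_inversionInd_eq_one h1))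
  · rintro (rfl | rfl) x hx
    · exact hx
    · exact posMat_comp_revPerm (Nat.even_choose_two_of_four_dvd h4) hx
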